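/- Define $F : \{(a_1, a_2, x_1, x_2) \in \mathbb{R}^4 : x_1 \neq x_2\} \to \mathbb{R}^3$ by $F(a_1, a_2, x_1, x_2) = \big( a_1 + a_2,\ a_1 a_2,\ \mathrm{sgn}(x_1 - x_2)(a_1^2 x_2 - a_2^2 x_1) + 3 a_1 a_2 e^{-|x_1 - x_2|} \big)$. At every point of its domain with $a_1 > 0$, $a_2 > 0$, and $a_1 \neq a_2$, the map $F$ is differentiable and its derivative (Jacobian matrix) has rank $3$; that is, the three component functions $a_1 + a_2$, $a_1 a_2$, and $I_{(2)}$ are functionally independent there. -/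

import Mathlib

/-- The map `F(a₁,a₂,x₁,x₂) = (a₁+a₂, a₁a₂, I₍₂₎(a₁,a₂,x₁,x₂))` where
`I₍₂₎ = sgn(x₁-x₂)(a₁² x₂ - a₂² x₁) + 3 a₁ a₂ e^{-|x₁-x₂|}`. -/
noncomputable def Fmap (p : ℝ × ℝ × ℝ × ℝ) : ℝ × ℝ × ℝ :=
  (p.1 + p.2.1, p.1 * p.2.1,
    Real.sign (p.2.2.1 - p.2.2.2) * (p.1 ^ 2 * p.2.2.2 - p.2.1 ^ 2 * p.2.2.1)
      + 3 * p.1 * p.2.1 * Real.exp (-|p.2.2.1 - p.2.2.2|))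

/-!
Off the diagonal `x₁ = x₂` the sign `s = sgn (x₁ - x₂) = ±1` is locally constant, and
`|x₁ - x₂| = s (x₁ - x₂)`, so near `p` the map `F` coincides with a smooth map whose Jacobian
is explicit. In the first two rows the `(a₁, a₂)`-block is `[[1, 1], [a₂, a₁]]`, of determinant
`a₁ - a₂ ≠ 0`, and the `x₁`-column is `(0, 0, -s a₂ (a₂ + 3 a₁ e^{-|x₁ - x₂|}))`, which is
nonzero for positive amplitudes. Hence the Jacobian has rank 3.
-/

open Filter Topology

namespace Real

theorem sign_mul_self_eq_abs (r : ℝ) : sign r * r = |r| := by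
  rcases lt_trichotomy r 0 with h | rfl | h
  · rw [sign_of_neg h, abs_of_neg h, neg_one_mul]
  · simp
  · rw [sign_of_pos h, abs_of_pos h, one_mul]

theorem eventually_sign_eq {r : ℝ} (hr : r ≠ 0) : ∀ᶠ y in 𝓝 r, sign y = sign r := by
  rcases hr.lt_or_gt with h | h
  · filter_upwards [Iio_mem_nhds h] with y hy
    rw [sign_of_neg hy, sign_of_neg h]
  · filter_upwards [Ioi_mem_nhds h] with y hy
    rw [sign_of_pos hy, sign_of_pos h]

end Real

noncomputable def FmapModel (s : ℝ) (q : ℝ × ℝ × ℝ × ℝ) : ℝ × ℝ × ℝ :=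
  (q.1 + q.2.1, q.1 * q.2.1,
    s * (q.1 ^ 2 * q.2.2.2 - q.2.1 ^ 2 * q.2.2.1)
      + 3 * q.1 * q.2.1 * Real.exp (-(s * (q.2.2.1 - q.2.2.2))))

theorem Fmap_eq_FmapModel (q : ℝ × ℝ × ℝ × ℝ) :
    Fmap q = FmapModel (Real.sign (q.2.2.1 - q.2.2.2)) q := by
  rw [Fmap, FmapModel, Real.sign_mul_self_eq_abs]

theorem Fmap_eventuallyEq_FmapModel {p : ℝ × ℝ × ℝ × ℝ} (hx : p.2.2.1 ≠ p.2.2.2) :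
    Fmap =ᶠ[𝓝 p] FmapModel (Real.sign (p.2.2.1 - p.2.2.2)) := by
  have hdiff : Continuous fun q : ℝ × ℝ × ℝ × ℝ => q.2.2.1 - q.2.2.2 := by fun_prop
  filter_upwards [hdiff.continuousAt.eventually (Real.eventually_sign_eq (sub_ne_zero.2 hx))]
    with q hq
  rw [Fmap_eq_FmapModel, hq]

noncomputable def FmapModelDeriv (s : ℝ) (p : ℝ × ℝ × ℝ × ℝ) :
    (ℝ × ℝ × ℝ × ℝ) →L[ℝ] ℝ × ℝ × ℝ :=
  LinearMap.toContinuousLinearMap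
    { toFun := fun v =>
        (v.1 + v.2.1, p.2.1 * v.1 + p.1 * v.2.1,
          s * (2 * p.1 * p.2.2.2 * v.1 + p.1 ^ 2 * v.2.2.2
                - 2 * p.2.1 * p.2.2.1 * v.2.1 - p.2.1 ^ 2 * v.2.2.1)
            + 3 * Real.exp (-(s * (p.2.2.1 - p.2.2.2)))
              * (p.2.1 * v.1 + p.1 * v.2.1 - s * p.1 * p.2.1 * (v.2.2.1 - v.2.2.2)))
      map_add' := fun v w => by ext <;> simp only [Prod.fst_add, Prod.snd_add] <;> ring
      map_smul' := fun c v => by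
        ext <;> simp only [Prod.smul_fst, Prod.smul_snd, smul_eq_mul, RingHom.id_apply] <;> ring }

theorem hasFDerivAt_FmapModel (s : ℝ) (p : ℝ × ℝ × ℝ × ℝ) :
    HasFDerivAt (FmapModel s) (FmapModelDeriv s p) p := by
  have ha := hasFDerivAt_fst (𝕜 := ℝ) (p := p)
  have hb := (hasFDerivAt_snd (𝕜 := ℝ) (p := p)).fst
  have hx₁ := (hasFDerivAt_snd (𝕜 := ℝ) (p := p)).snd.fst
  have hx₂ := (hasFDerivAt_snd (𝕜 := ℝ) (p := p)).snd.snd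
  have h := (ha.add hb).prodMk ((ha.mul hb).prodMk
    ((((ha.pow 2).mul hx₂).sub ((hb.pow 2).mul hx₁)).const_mul s |>.add
      (((ha.const_mul 3).mul hb).mul ((hx₁.sub hx₂).const_mul s).neg.exp)))
  refine h.congr_fderiv ?_
  ext <;> simp [FmapModelDeriv] <;> ring

theorem FmapModelDeriv_surjective {s : ℝ} (hs : s ≠ 0) {p : ℝ × ℝ × ℝ × ℝ}
    (ha₁ : 0 < p.1) (ha₂ : 0 < p.2.1) (hane : p.1 ≠ p.2.1) :
    Function.Surjective (FmapModelDeriv s p) := by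
  obtain ⟨a, b, x₁, x₂⟩ := p
  dsimp only at ha₁ ha₂ hane
  set E := Real.exp (-(s * (x₁ - x₂))) with hE
  rintro ⟨u, v, w⟩
  have hab : a - b ≠ 0 := sub_ne_zero.2 hane
  obtain ⟨da, db, hu, hv⟩ : ∃ da db : ℝ, da + db = u ∧ b * da + a * db = v :=
    ⟨(a * u - v) / (a - b), (v - b * u) / (a - b), by field_simp; ring, by field_simp; ring⟩
  have hc : s * (b * (b + 3 * a * E)) ≠ 0 := by positivity
  set r := s * (2 * a * x₂ * da - 2 * b * x₁ * db) + 3 * E * (b * da + a * db) - w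
  refine ⟨(da, db, r / (s * (b * (b + 3 * a * E))), 0), ?_⟩
  simp only [FmapModelDeriv, LinearMap.coe_toContinuousLinearMap', LinearMap.coe_mk,
    AddHom.coe_mk, Prod.mk.injEq, ← hE]
  exact ⟨hu, hv, by linear_combination -(mul_div_cancel₀ r hc)⟩

/-- At every point `(a₁,a₂,x₁,x₂)` with `x₁ ≠ x₂`, `a₁ > 0`,
`a₂ > 0`, and `a₁ ≠ a₂`, the map `F` is differentiable and its derivative has
rank `3` (i.e. is surjective onto `ℝ³`): the functions `a₁+a₂`, `a₁a₂`, `I₍₂₎`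
are functionally independent there. -/
theorem Fmap_full_rank
    (p : ℝ × ℝ × ℝ × ℝ) (hx : p.2.2.1 ≠ p.2.2.2)
    (ha₁ : 0 < p.1) (ha₂ : 0 < p.2.1) (hane : p.1 ≠ p.2.1) :
    ∃ L : (ℝ × ℝ × ℝ × ℝ) →L[ℝ] (ℝ × ℝ × ℝ),
      HasFDerivAt Fmap L p ∧ Function.Surjective L := by
  have hs : Real.sign (p.2.2.1 - p.2.2.2) ≠ 0 := Real.sign_eq_zero_iff.not.2 (sub_ne_zero.2 hx)
  exact ⟨_, (hasFDerivAt_FmapModel _ p).congr_of_eventuallyEq (Fmap_eventuallyEq_FmapModel hx),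
    FmapModelDeriv_surjective hs ha₁ ha₂ hane⟩
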